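/- arXiv:2002.08145 — 4 statements merged into one kernel-verified Lean document; each statement's English description precedes it below -/
import Mathlib

section
/- Let A be an invertible symmetric positive definite n×n matrix, C a symmetric positive definite m×m matrix, and B an m×n matrix. Every eigenvalue λ of the generalized problem [[A, Bᵀ],[B, C]](x,y)ᵀ = λ [[0, -Bᵀ],[0, 0]](x,y)ᵀ with eigenvector (x,y), x ≠ 0, is real. -/
/-!
The block equations read `A x + Bᴴ y = -λ Bᴴ y` and `B x + C y = 0`. Pairing the first with `x`
and the second with `y` gives `p + q = -λ q` and `conj q + s = 0`, where `p = xᴴ A x > 0`,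
`q = xᴴ Bᴴ y` and `s = yᴴ C y ≥ 0`. Hence `q = -s` is real, and `p = (1 + λ) s` forces `s > 0`
and `1 + λ = p / s > 0`. Real positive definite matrices stay positive definite over `ℂ`, which
reduces the theorem to this computation.
-/

open Matrix
open scoped ComplexOrder

namespace Matrix

variable {ι κ 𝕜 : Type*}

lemma conjTranspose_map_ofReal (M : Matrix κ ι ℝ) :
    (M.map Complex.ofReal)ᴴ = Mᵀ.map Complex.ofReal := by
  ext i j
  simp

variable [Fintype ι] [Fintype κ]

lemma star_dotProduct_mulVec_conjTranspose [CommSemiring 𝕜] [StarRing 𝕜] (M : Matrix κ ι 𝕜)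
    (x : ι → 𝕜) (y : κ → 𝕜) : star (star x ⬝ᵥ Mᴴ *ᵥ y) = star y ⬝ᵥ M *ᵥ x := by
  rw [star_dotProduct, star_star, star_mulVec, ← dotProduct_mulVec, conjTranspose_conjTranspose]

lemma re_star_dotProduct_map_ofReal_mulVec (M : Matrix ι ι ℝ) (z : ι → ℂ) :
    (star z ⬝ᵥ M.map Complex.ofReal *ᵥ z).re
      = (fun i => (z i).re) ⬝ᵥ M *ᵥ (fun i => (z i).re)
        + (fun i => (z i).im) ⬝ᵥ M *ᵥ (fun i => (z i).im) := by
  simp only [dotProduct, mulVec, map_apply, Pi.star_apply, Complex.re_sum, Finset.mul_sum,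
    ← Finset.sum_add_distrib]
  refine Finset.sum_congr rfl fun i _ => Finset.sum_congr rfl fun j _ => ?_
  simp [Complex.mul_re, Complex.mul_im]

lemma PosDef.map_ofReal {M : Matrix ι ι ℝ} (hM : M.PosDef) : (M.map Complex.ofReal).PosDef := by
  have hH : (M.map Complex.ofReal).IsHermitian := by
    rw [IsHermitian, conjTranspose_map_ofReal, ← conjTranspose_eq_transpose_of_trivial,
      hM.isHermitian.eq]
  refine .of_dotProduct_mulVec_pos hH fun z hz => Complex.pos_iff.mpr ⟨?_, ?_⟩
  · have hpos (v : ι → ℝ) (hv : v ≠ 0) : 0 < v ⬝ᵥ M *ᵥ v := by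
      simpa using hM.dotProduct_mulVec_pos hv
    have hnonneg (v : ι → ℝ) : 0 ≤ v ⬝ᵥ M *ᵥ v := by
      simpa using hM.posSemidef.dotProduct_mulVec_nonneg v
    have hre_or_him : (fun i => (z i).re) ≠ 0 ∨ (fun i => (z i).im) ≠ 0 := by
      by_contra! h
      exact hz (funext fun i => Complex.ext (congrFun h.1 i) (congrFun h.2 i))
    rw [re_star_dotProduct_map_ofReal_mulVec]
    rcases hre_or_him with h | h
    · exact add_pos_of_pos_of_nonneg (hpos _ h) (hnonneg _)
    · exact add_pos_of_nonneg_of_pos (hnonneg _) (hpos _ h)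
  · exact (hH.im_star_dotProduct_mulVec_self z).symm

theorem one_add_pos_of_mulVec_fromBlocks_eq_smul [RCLike 𝕜] {A : Matrix ι ι 𝕜}
    {B : Matrix κ ι 𝕜} {C : Matrix κ κ 𝕜} (hA : A.PosDef) (hC : C.PosSemidef) {lam : 𝕜}
    {x : ι → 𝕜} {y : κ → 𝕜} (hx : x ≠ 0)
    (h : fromBlocks A Bᴴ B C *ᵥ Sum.elim x y = lam • (fromBlocks 0 (-Bᴴ) 0 0 *ᵥ Sum.elim x y)) :
    0 < 1 + lam := by
  rw [fromBlocks_mulVec, fromBlocks_mulVec] at h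
  have h₁ : A *ᵥ x + Bᴴ *ᵥ y = -(lam • Bᴴ *ᵥ y) :=
    funext fun i => by simpa [neg_mulVec] using congrFun h (.inl i)
  have h₂ : B *ᵥ x + C *ᵥ y = 0 := funext fun i => by simpa using congrFun h (.inr i)
  set p := star x ⬝ᵥ A *ᵥ x
  set q := star x ⬝ᵥ Bᴴ *ᵥ y
  set s := star y ⬝ᵥ C *ᵥ y
  have hp : 0 < p := hA.dotProduct_mulVec_pos hx
  have hs : 0 ≤ s := hC.dotProduct_mulVec_nonneg y
  have e₁ : p + q = -(lam * q) := by
    simpa [dotProduct_add, dotProduct_smul] using congrArg (star x ⬝ᵥ ·) h₁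
  have e₂ : star q + s = 0 := by
    rw [star_dotProduct_mulVec_conjTranspose]
    simpa [dotProduct_add] using congrArg (star y ⬝ᵥ ·) h₂
  have hq : q = -s := by
    rw [← star_star q, eq_neg_of_add_eq_zero_left e₂, star_neg,
      (IsSelfAdjoint.of_nonneg hs).star_eq]
  have hps : p = (1 + lam) * s := by linear_combination e₁ - (1 + lam) * hq
  have hs_pos : 0 < s := lt_of_le_of_ne hs fun h0 => hp.ne' (by rw [hps, ← h0, mul_zero])
  rw [eq_div_of_mul_eq hs_pos.ne' hps.symm]
  exact div_pos hp hs_pos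

end Matrix

/-- Every eigenvalue `λ ∈ ℂ` of the generalized problem
`[[A, Bᵀ],[B, C]](x,y)ᵀ = λ [[0, -Bᵀ],[0, 0]](x,y)ᵀ` with eigenvector `(x,y)`, `x ≠ 0`,
where `A`, `C` are real symmetric positive definite (hence invertible) and `B` is real,
is real. -/
theorem stmt1 {n m : ℕ} (A : Matrix (Fin n) (Fin n) ℝ) (B : Matrix (Fin m) (Fin n) ℝ)
    (C : Matrix (Fin m) (Fin m) ℝ) (hA : A.PosDef) (hC : C.PosDef)
    (lam : ℂ) (x : Fin n → ℂ) (y : Fin m → ℂ) (hx : x ≠ 0)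
    (h : (fromBlocks (A.map Complex.ofReal) (Bᵀ.map Complex.ofReal)
            (B.map Complex.ofReal) (C.map Complex.ofReal)) *ᵥ Sum.elim x y
        = lam • ((fromBlocks 0 (-(Bᵀ.map Complex.ofReal)) 0 0) *ᵥ Sum.elim x y)) :
    lam.im = 0 := by
  rw [← conjTranspose_map_ofReal] at h
  have hpos := one_add_pos_of_mulVec_fromBlocks_eq_smul hA.map_ofReal hC.map_ofReal.posSemidef hx h
  simpa [eq_comm] using (Complex.pos_iff.mp hpos).2
end

section
/- Let A be an n×n symmetric positive definite matrix, C an m×m symmetric positive definite matrix, and B an m×n matrix. The generalized eigenvalue problem [[A, Bᵀ],[B, C]](x,y)ᵀ = λ[[0, -Bᵀ],[0,0]](x,y)ᵀ has: (i) the kernel of the right-hand side matrix has dimension n + dim ker(Bᵀ); (ii) the number of finite eigenvalues, counted with multiplicity via the Schur complement problem Ax = (λ+1)BᵀC⁻¹Bx, equals rank(Bᵀ) = rank(B). -/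
/-!
Write `A = Lᴴ L` with `L` invertible. Then `A - μ S = Lᴴ (1 - μ M) L` for the positive
semidefinite `M = L⁻ᴴ S L⁻¹`, so if `M` has eigenvalues `dᵢ`, the kernel of the pencil at `μ`
has dimension `#{i | μ dᵢ = 1}`. Hence the finite eigenvalues are the `dᵢ⁻¹` with `dᵢ ≠ 0`, and
their multiplicities add up to `rank M = rank S`; for `S = Bᵀ C⁻¹ B` with `C` positive definite,
`rank S = rank B`. The kernel of `[[0, -Bᵀ], [0, 0]]` is the whole flux space times `ker Bᵀ`.
-/

open Matrix Module Finset
open scoped MatrixOrder ComplexOrder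

section

variable {ι K : Type*} [GroupWithZero K]

theorem mul_eq_one_iff_ne_zero_and_inv_eq {a b : K} : a * b = 1 ↔ b ≠ 0 ∧ b⁻¹ = a :=
  ⟨fun h => ⟨right_ne_zero_of_mul_eq_one h, (eq_inv_of_mul_eq_one_left h).symm⟩,
    fun ⟨hb, h⟩ => (mul_eq_one_iff_eq_inv₀ hb).2 h.symm⟩

variable [Fintype ι] [DecidableEq K]

theorem Finset.mem_image_inv_filter_ne_zero_iff (d : ι → K) (μ : K) :
    μ ∈ ({i | d i ≠ 0} : Finset ι).image (fun i => (d i)⁻¹) ↔ ∃ i, μ * d i = 1 := by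
  simp [mul_eq_one_iff_ne_zero_and_inv_eq]

theorem Finset.sum_card_filter_mul_eq_one (d : ι → K) :
    ∑ μ ∈ ({i | d i ≠ 0} : Finset ι).image (fun i => (d i)⁻¹), #{i | μ * d i = 1} =
      #{i | d i ≠ 0} := by
  rw [card_eq_sum_card_image (fun i => (d i)⁻¹)]
  refine sum_congr rfl fun μ _ => congrArg card ?_
  ext i
  simp [mul_eq_one_iff_ne_zero_and_inv_eq]

end

namespace Matrix

section Field

variable {K : Type*} [Field K] {n m : Type*} [Fintype n] [Fintype m]

omit [Fintype m] in
theorem finrank_ker_mulVecLin_add_rank (X : Matrix m n K) :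
    finrank K (LinearMap.ker X.mulVecLin) + X.rank = Fintype.card n := by
  rw [add_comm, rank, X.mulVecLin.finrank_range_add_finrank_ker, finrank_fintype_fun_eq_card]

theorem exists_ne_zero_mulVec_eq_smul_mulVec_iff (A S : Matrix n n K) (μ : K) :
    (∃ x ≠ 0, A *ᵥ x = μ • (S *ᵥ x)) ↔ 0 < finrank K (LinearMap.ker (A - μ • S).mulVecLin) := by
  rw [pos_iff_ne_zero, Ne, Submodule.finrank_eq_zero, ← Ne, Submodule.ne_bot_iff]
  simp only [LinearMap.mem_ker, mulVecLin_apply, sub_mulVec, smul_mulVec, sub_eq_zero]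
  exact exists_congr fun x => and_comm

theorem finrank_ker_fromBlocks_zero_zero_zero (N : Matrix n m K) :
    finrank K (LinearMap.ker (fromBlocks (0 : Matrix n n K) N 0 (0 : Matrix m m K)).mulVecLin) =
      Fintype.card n + finrank K (LinearMap.ker N.mulVecLin) := by
  set g := N.mulVecLin ∘ₗ LinearMap.funLeft K K (Sum.inr : m → n ⊕ m)
  have hker : LinearMap.ker (fromBlocks (0 : Matrix n n K) N 0 (0 : Matrix m m K)).mulVecLin =
      LinearMap.ker g := by
    ext v
    simp [g, funext_iff, mulVec, dotProduct, Fintype.sum_sum_type]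
  have hrange : LinearMap.range g = LinearMap.range N.mulVecLin :=
    LinearMap.range_comp_of_range_eq_top _ <| LinearMap.range_eq_top.2 <|
      LinearMap.funLeft_surjective_of_injective _ _ _ Sum.inr_injective
  have hg := g.finrank_range_add_finrank_ker
  have hN := N.mulVecLin.finrank_range_add_finrank_ker
  rw [hrange, finrank_fintype_fun_eq_card, Fintype.card_sum] at hg
  rw [finrank_fintype_fun_eq_card] at hN
  rw [hker]
  omega

end Field

variable {𝕜 : Type*} [RCLike 𝕜] {n m : Type*} [Fintype n] [DecidableEq n] [Fintype m]
  [DecidableEq m]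

theorem PosDef.exists_isUnit_conjTranspose_mul_self {A : Matrix n n 𝕜} (hA : A.PosDef) :
    ∃ L : Matrix n n 𝕜, IsUnit L ∧ Lᴴ * L = A := by
  have hL : (CFC.sqrt A).PosDef := hA.isStrictlyPositive.sqrt.posDef
  exact ⟨CFC.sqrt A, hL.isUnit, by rw [hL.1.eq, CFC.sqrt_mul_sqrt_self A hA.posSemidef.nonneg]⟩

omit [DecidableEq n] in
theorem PosDef.rank_conjTranspose_mul_mul {D : Matrix m m 𝕜} (hD : D.PosDef) (B : Matrix m n 𝕜) :
    (Bᴴ * D * B).rank = B.rank := by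
  obtain ⟨L, hL, rfl⟩ := hD.exists_isUnit_conjTranspose_mul_self
  rw [← rank_mul_eq_right_of_isUnit_det L B ((isUnit_iff_isUnit_det L).1 hL),
    ← rank_conjTranspose_mul_self (L * B), conjTranspose_mul]
  simp only [Matrix.mul_assoc]

theorem IsHermitian.rank_one_sub_smul {M : Matrix n n 𝕜} (hM : M.IsHermitian) (μ : 𝕜) :
    (1 - μ • M).rank = #{i | μ * hM.eigenvalues i ≠ 1} := by
  have hdiag : diagonal (fun i => 1 - μ * hM.eigenvalues i) =
      1 - μ • diagonal (RCLike.ofReal ∘ hM.eigenvalues) := by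
    rw [← diagonal_one, ← diagonal_smul, ← diagonal_sub]
    rfl
  have hconj : 1 - μ • M = Unitary.conjStarAlgAut 𝕜 _ hM.eigenvectorUnitary
      (diagonal fun i => 1 - μ * hM.eigenvalues i) := by
    rw [hdiag, map_sub, map_one, map_smul, ← hM.spectral_theorem]
  rw [hconj, Unitary.conjStarAlgAut_apply, ← Unitary.coe_star]
  simp [-isUnit_iff_ne_zero, -Unitary.coe_star, rank_diagonal, Fintype.card_subtype, sub_ne_zero,
    ne_comm (a := (1 : 𝕜))]

theorem PosDef.exists_finrank_ker_sub_smul_eq_card {A S : Matrix n n 𝕜} (hA : A.PosDef)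
    (hS : S.PosSemidef) :
    ∃ d : n → 𝕜, (∀ μ : 𝕜, finrank 𝕜 (LinearMap.ker (A - μ • S).mulVecLin) = #{i | μ * d i = 1}) ∧
      #{i | d i ≠ 0} = S.rank := by
  obtain ⟨L, hL, rfl⟩ := hA.exists_isUnit_conjTranspose_mul_self
  have hLdet : IsUnit L.det := (isUnit_iff_isUnit_det L).1 hL
  have hrank (X : Matrix n n 𝕜) : (Lᴴ * X * L).rank = X.rank := by
    rw [rank_mul_eq_left_of_isUnit_det _ _ hLdet, rank_mul_eq_right_of_isUnit_det _ _
      (by simpa [det_conjTranspose] using hLdet.star)]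
  set M := (L⁻¹)ᴴ * S * L⁻¹
  have hM : M.PosSemidef := hS.conjTranspose_mul_mul_same L⁻¹
  have hSM : S = Lᴴ * M * L := by
    simp only [M, ← Matrix.mul_assoc, ← conjTranspose_mul, nonsing_inv_mul _ hLdet,
      conjTranspose_one, Matrix.one_mul]
    rw [Matrix.mul_assoc, nonsing_inv_mul _ hLdet, Matrix.mul_one]
  have hpencil (μ : 𝕜) : Lᴴ * L - μ • S = Lᴴ * (1 - μ • M) * L := by
    rw [hSM, Matrix.mul_sub, Matrix.sub_mul, Matrix.mul_one, mul_smul_comm, smul_mul_assoc]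
  refine ⟨fun i => hM.1.eigenvalues i, fun μ => ?_, ?_⟩
  · have hnull := (Lᴴ * (1 - μ • M) * L).finrank_ker_mulVecLin_add_rank
    rw [hrank, hM.1.rank_one_sub_smul, ← hpencil] at hnull
    have hsplit := card_filter_add_card_filter_not (s := univ) (μ * hM.1.eigenvalues · = 1)
    rw [card_univ] at hsplit
    simp only [ne_eq] at hnull
    dsimp only
    omega
  · rw [hSM, hrank, hM.1.rank_eq_card_non_zero_eigs, Fintype.card_subtype]
    simp

end Matrix

/-- Eigenstructure of the discrete FOSLS pencil `[[A,Bᵀ],[B,C]] = λ[[0,-Bᵀ],[0,0]]`: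
(i) the kernel of the right-hand side block matrix has dimension `n + dim ker Bᵀ`;
(ii) the finite eigenvalues, counted with multiplicity via the Schur complement
problem `Ax = (λ+1)BᵀC⁻¹Bx`, number exactly `rank Bᵀ = rank B`. -/
theorem stmt8 {n m : ℕ} (A : Matrix (Fin n) (Fin n) ℝ) (B : Matrix (Fin m) (Fin n) ℝ)
    (C : Matrix (Fin m) (Fin m) ℝ) (hA : A.PosDef) (hC : C.PosDef) :
    (Module.finrank ℝ
        (LinearMap.ker ((fromBlocks (0 : Matrix (Fin n) (Fin n) ℝ) (-Bᵀ)
          (0 : Matrix (Fin m) (Fin n) ℝ) (0 : Matrix (Fin m) (Fin m) ℝ)).mulVecLin))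
      = n + Module.finrank ℝ (LinearMap.ker (Bᵀ.mulVecLin))) ∧
    (∃ Λ : Finset ℝ,
      (∀ lam : ℝ,
        (∃ x : Fin n → ℝ, x ≠ 0 ∧ A *ᵥ x = (lam + 1) • ((Bᵀ * C⁻¹ * B) *ᵥ x)) ↔ lam ∈ Λ) ∧
      (∑ lam ∈ Λ, Module.finrank ℝ
          (LinearMap.ker ((A - (lam + 1) • (Bᵀ * C⁻¹ * B)).mulVecLin))) = Bᵀ.rank ∧
      Bᵀ.rank = B.rank) := by
  refine ⟨?_, ?_⟩
  · rw [finrank_ker_fromBlocks_zero_zero_zero, Fintype.card_fin,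
      show (-Bᵀ).mulVecLin = -Bᵀ.mulVecLin from LinearMap.ext fun v => neg_mulVec v Bᵀ,
      LinearMap.ker_neg]
  have hS : (Bᵀ * C⁻¹ * B).PosSemidef := by
    simpa using hC.inv.posSemidef.conjTranspose_mul_mul_same B
  obtain ⟨d, hker, hcard⟩ := hA.exists_finrank_ker_sub_smul_eq_card hS
  refine ⟨(({i | d i ≠ 0} : Finset (Fin n)).image fun i => (d i)⁻¹).map
    (Equiv.subRight 1).toEmbedding, fun lam => ?_, ?_, rank_transpose B⟩
  · rw [exists_ne_zero_mulVec_eq_smul_mulVec_iff, hker, card_pos, filter_nonempty_iff,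
      mem_map_equiv, Equiv.subRight_symm_apply, mem_image_inv_filter_ne_zero_iff]
    simp
  · rw [sum_map]
    simp only [Equiv.coe_toEmbedding, Equiv.subRight_apply, sub_add_cancel, hker]
    rw [sum_card_filter_mul_eq_one, hcard, rank_transpose]
    simpa using hC.inv.rank_conjTranspose_mul_mul B
end

section
/- Let H be a Hilbert space, T : H → H a compact self-adjoint operator, and T_h a sequence of compact self-adjoint operators with ‖T − T_h‖ → 0. Then for each nonzero eigenvalue μ of T, the spectral projections converge: the gap between the eigenspace E = ker(T − μI) and the span E_h of eigenvectors of T_h with eigenvalues converging to μ tends to zero. -/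
/-!
The eigenvectors of a compact self-adjoint operator `A` span a dense subspace, and on a finite
sum `u = ∑ v_z` of eigenvectors `‖A u - μ u‖² = ∑ (z - μ)² ‖v_z‖²`. Hence, if every eigenvalue
of `A` outside a set `S` lies at distance at least `c` from `μ`, then `‖A w - μ w‖ ≥ c ‖w‖` on
the orthogonal complement of the span `M` of the eigenspaces for `S` (restrict `A` to this
invariant complement), and splitting `u` along `Mᗮ ⊕ Mᗮᗮ` gives `c · dist(u, M) ≤ ‖A u - μ u‖`.

Take `c = r`, the isolation radius of `μ`. A unit vector `u ∈ E` has
`‖T_k u - μ u‖ ≤ ‖T - T_k‖`, and a unit vector `u ∈ E_k` has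
`‖T u - μ u‖ ≤ ‖T - T_k‖ + max_{z ∈ ν_k} |z - μ|`. Both bounds tend to zero.
-/

open Filter

/-- The gap `δ(E,F)` between two subsets of a normed space:
`max( sup_{u∈E,‖u‖=1} dist(u,F), sup_{u∈F,‖u‖=1} dist(u,E) )`. -/
noncomputable def subspaceGap {H : Type*} [NormedAddCommGroup H] (E F : Set H) : ℝ :=
  max (⨆ u : {u : H // u ∈ E ∧ ‖u‖ = 1}, Metric.infDist (u : H) F)
      (⨆ u : {u : H // u ∈ F ∧ ‖u‖ = 1}, Metric.infDist (u : H) E)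

open Metric Module.End

theorem Submodule.norm_le_norm_add_of_mem_orthogonal {H : Type*} [NormedAddCommGroup H]
    [InnerProductSpace ℝ H] {K : Submodule ℝ H} {a b : H} (ha : a ∈ Kᗮ) (hb : b ∈ K) :
    ‖b‖ ≤ ‖a + b‖ := by
  have h := norm_add_sq_eq_norm_sq_add_norm_sq_real (K.inner_left_of_mem_orthogonal hb ha)
  nlinarith [norm_nonneg a, norm_nonneg b, norm_nonneg (a + b)]

theorem Module.End.exists_sum_of_mem_biSup_eigenspace {H : Type*} [AddCommGroup H]
    [Module ℝ H] {A : End ℝ H} {p : ℝ → Prop} {x : H}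
    (hx : x ∈ ⨆ z, ⨆ (_ : p z), eigenspace A z) :
    ∃ (s : Finset ℝ) (v : ℝ → H), (∀ z ∈ s, p z ∧ v z ∈ eigenspace A z) ∧
      x = ∑ z ∈ s, v z := by
  classical
  obtain ⟨s, hs⟩ := Submodule.mem_iSup_iff_exists_finset.mp hx
  obtain ⟨v, rfl⟩ := (Submodule.mem_iSup_finset_iff_exists_sum _ x).mp hs
  have hvp : ∀ z, (v z : H) ≠ 0 → p z := fun z hz => by
    by_contra hpz
    exact hz (by simpa [hpz] using (v z).2)
  refine ⟨s.filter p, fun z => v z, fun z hz => ⟨(Finset.mem_filter.mp hz).2, ?_⟩,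
    (Finset.sum_filter_of_ne fun z _ => hvp z).symm⟩
  exact (iSup_const_le : (⨆ (_ : p z), eigenspace A z) ≤ _) (v z).2

namespace LinearMap.IsSymmetric

variable {H : Type*} [NormedAddCommGroup H] [InnerProductSpace ℝ H] {A : H →ₗ[ℝ] H}

theorem norm_sum_sq_of_mem_eigenspace (hA : A.IsSymmetric) {s : Finset ℝ} {v : ℝ → H}
    (hv : ∀ z ∈ s, v z ∈ eigenspace A z) :
    ‖∑ z ∈ s, v z‖ ^ 2 = ∑ z ∈ s, ‖v z‖ ^ 2 := by
  classical
  let w : ∀ z, eigenspace A z := fun z => if h : z ∈ s then ⟨v z, hv z h⟩ else 0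
  have hw : ∀ z ∈ s, ((w z : eigenspace A z) : H) = v z := fun z hz => by simp [w, hz]
  rw [← Finset.sum_congr rfl hw, ← Finset.sum_congr rfl fun z hz => congrArg (‖·‖ ^ 2) (hw z hz)]
  exact hA.orthogonalFamily_eigenspaces.norm_sum w s

theorem norm_apply_sub_smul_sq_of_mem_eigenspace (hA : A.IsSymmetric) {s : Finset ℝ}
    {v : ℝ → H} (hv : ∀ z ∈ s, v z ∈ eigenspace A z) (μ : ℝ) :
    ‖A (∑ z ∈ s, v z) - μ • ∑ z ∈ s, v z‖ ^ 2 = ∑ z ∈ s, (z - μ) ^ 2 * ‖v z‖ ^ 2 := by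
  have hsub : A (∑ z ∈ s, v z) - μ • ∑ z ∈ s, v z = ∑ z ∈ s, (z - μ) • v z := by
    simp only [map_sum, Finset.smul_sum, ← Finset.sum_sub_distrib, sub_smul]
    refine Finset.sum_congr rfl fun z hz => ?_
    rw [mem_eigenspace_iff.mp (hv z hz)]
  rw [hsub, hA.norm_sum_sq_of_mem_eigenspace fun z hz => (eigenspace A z).smul_mem _ (hv z hz)]
  simp only [norm_smul, mul_pow, Real.norm_eq_abs, sq_abs]

theorem norm_apply_sub_smul_le_of_mem_biSup (hA : A.IsSymmetric) {p : ℝ → Prop} {μ δ : ℝ}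
    (hδ0 : 0 ≤ δ) (hδ : ∀ z, p z → |z - μ| ≤ δ) {x : H}
    (hx : x ∈ ⨆ z, ⨆ (_ : p z), eigenspace A z) :
    ‖A x - μ • x‖ ≤ δ * ‖x‖ := by
  obtain ⟨s, v, hv, rfl⟩ := exists_sum_of_mem_biSup_eigenspace hx
  refine pow_le_pow_iff_left₀ (norm_nonneg _) (by positivity) two_ne_zero |>.mp ?_
  rw [hA.norm_apply_sub_smul_sq_of_mem_eigenspace (fun z hz => (hv z hz).2), mul_pow,
    hA.norm_sum_sq_of_mem_eigenspace (fun z hz => (hv z hz).2), Finset.mul_sum]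
  refine Finset.sum_le_sum fun z hz => mul_le_mul_of_nonneg_right ?_ (sq_nonneg _)
  rw [← sq_abs]
  exact pow_le_pow_left₀ (abs_nonneg _) (hδ z (hv z hz).1) 2

theorem le_norm_apply_sub_smul_of_mem_iSup (hA : A.IsSymmetric) {μ c : ℝ} (hc0 : 0 ≤ c)
    (hc : ∀ z, HasEigenvalue A z → c ≤ |z - μ|) {x : H} (hx : x ∈ ⨆ z, eigenspace A z) :
    c * ‖x‖ ≤ ‖A x - μ • x‖ := by
  obtain ⟨s, v, hv, rfl⟩ :=
    exists_sum_of_mem_biSup_eigenspace (p := fun _ => True) (by simpa using hx)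
  refine pow_le_pow_iff_left₀ (by positivity) (norm_nonneg _) two_ne_zero |>.mp ?_
  rw [hA.norm_apply_sub_smul_sq_of_mem_eigenspace (fun z hz => (hv z hz).2), mul_pow,
    hA.norm_sum_sq_of_mem_eigenspace (fun z hz => (hv z hz).2), Finset.mul_sum]
  refine Finset.sum_le_sum fun z hz => ?_
  rcases eq_or_ne (v z) 0 with h0 | h0
  · simp [h0]
  have hcz := hc z (hasEigenvalue_of_hasEigenvector ⟨(hv z hz).2, h0⟩)
  rw [← sq_abs (z - μ)]
  exact mul_le_mul_of_nonneg_right (pow_le_pow_left₀ hc0 hcz 2) (sq_nonneg _)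

theorem apply_mem_orthogonal_biSup_eigenspace (hA : A.IsSymmetric) (p : ℝ → Prop) {x : H}
    (hx : x ∈ (⨆ z, ⨆ (_ : p z), eigenspace A z)ᗮ) :
    A x ∈ (⨆ z, ⨆ (_ : p z), eigenspace A z)ᗮ := by
  refine hA.orthogonalComplement_mem_invtSubmodule ((mem_invtSubmodule A).mpr
    (iSup₂_le fun z hz => ?_)) hx
  exact ((mem_invtSubmodule A).mp (eigenspace_mem_invtSubmodule A z)).trans
    (Submodule.comap_mono (le_iSup₂ (f := fun z (_ : p z) => eigenspace A z) z hz))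

end LinearMap.IsSymmetric

namespace ContinuousLinearMap

variable {H : Type*} [NormedAddCommGroup H] [InnerProductSpace ℝ H] [CompleteSpace H]
  {A : H →L[ℝ] H}

theorem le_norm_apply_sub_smul_of_forall_hasEigenvalue (hAc : IsCompactOperator A)
    (hA : (A : H →ₗ[ℝ] H).IsSymmetric) {μ c : ℝ} (hc0 : 0 ≤ c)
    (hc : ∀ z, HasEigenvalue (A : H →ₗ[ℝ] H) z → c ≤ |z - μ|) (x : H) :
    c * ‖x‖ ≤ ‖A x - μ • x‖ := by
  have hdense : Dense ((⨆ z, eigenspace (A : H →ₗ[ℝ] H) z : Submodule ℝ H) : Set H) := by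
    rw [Submodule.dense_iff_topologicalClosure_eq_top,
      ← Submodule.orthogonal_orthogonal_eq_closure,
      orthogonalComplement_iSup_eigenspaces_eq_bot hAc hA, Submodule.bot_orthogonal_eq_top]
  exact hdense.induction (fun y hy => hA.le_norm_apply_sub_smul_of_mem_iSup hc0 hc hy)
    (isClosed_le (by fun_prop) (by fun_prop)) x

theorem le_norm_apply_sub_smul_of_mem_orthogonal (hAc : IsCompactOperator A)
    (hA : (A : H →ₗ[ℝ] H).IsSymmetric) (p : ℝ → Prop) {μ c : ℝ} (hc0 : 0 ≤ c)
    (hc : ∀ z, HasEigenvalue (A : H →ₗ[ℝ] H) z → ¬ p z → c ≤ |z - μ|) {x : H}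
    (hx : x ∈ (⨆ z, ⨆ (_ : p z), eigenspace (A : H →ₗ[ℝ] H) z)ᗮ) :
    c * ‖x‖ ≤ ‖A x - μ • x‖ := by
  set M := ⨆ z, ⨆ (_ : p z), eigenspace (A : H →ₗ[ℝ] H) z
  have hM : ∀ y ∈ Mᗮ, A y ∈ Mᗮ := fun y hy => hA.apply_mem_orthogonal_biSup_eigenspace p hy
  let B : Mᗮ →L[ℝ] Mᗮ := A.restrict hM
  have hB : (B : Mᗮ →ₗ[ℝ] Mᗮ).IsSymmetric := hA.restrict_invariant hM
  refine le_norm_apply_sub_smul_of_forall_hasEigenvalue (hAc.restrict' hM) hB hc0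
    (fun z hz => ?_) ⟨x, hx⟩
  obtain ⟨v, hv, hv0⟩ := hz.exists_hasEigenvector
  have hAv : A v = z • (v : H) := congrArg Subtype.val (mem_eigenspace_iff.mp hv)
  have hv0' : (v : H) ≠ 0 := by simpa using hv0
  refine hc z (hasEigenvalue_of_hasEigenvector ⟨mem_eigenspace_iff.mpr hAv, hv0'⟩)
    fun hpz => hv0' ?_
  have hvM : (v : H) ∈ M := (le_iSup₂ (f := fun z (_ : p z) => eigenspace (A : H →ₗ[ℝ] H) z)
    z hpz) (mem_eigenspace_iff.mpr hAv)
  exact inner_self_eq_zero.mp (Submodule.inner_right_of_mem_orthogonal hvM v.2)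

theorem mul_infDist_le_norm_apply_sub_smul (hA : (A : H →ₗ[ℝ] H).IsSymmetric)
    {M : Submodule ℝ H} (hM : ∀ x ∈ Mᗮ, A x ∈ Mᗮ) {μ c : ℝ} (hc0 : 0 ≤ c)
    (hc : ∀ w ∈ Mᗮ, c * ‖w‖ ≤ ‖A w - μ • w‖) (u : H) :
    c * infDist u M ≤ ‖A u - μ • u‖ := by
  set w := Mᗮ.starProjection u
  have hw : w ∈ Mᗮ := Mᗮ.starProjection_apply_mem u
  have hMperp : ∀ x ∈ Mᗮᗮ, A x ∈ Mᗮᗮ := fun x hx =>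
    hA.orthogonalComplement_mem_invtSubmodule (p := Mᗮ) (fun y hy => hM y hy) hx
  have huw : u - w ∈ Mᗮᗮ := Mᗮ.sub_starProjection_mem_orthogonal u
  have hdist : infDist u M ≤ ‖w‖ := by
    rw [Submodule.orthogonal_orthogonal_eq_closure] at huw
    rw [← infDist_closure, ← Submodule.topologicalClosure_coe]
    simpa [dist_eq_norm] using infDist_le_dist_of_mem (x := u) huw
  have hsplit : A u - μ • u = (A (u - w) - μ • (u - w)) + (A w - μ • w) := by
    simp only [map_sub, smul_sub]; abel
  calc c * infDist u M ≤ c * ‖w‖ := mul_le_mul_of_nonneg_left hdist hc0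
    _ ≤ ‖A w - μ • w‖ := hc w hw
    _ ≤ ‖A u - μ • u‖ := hsplit ▸ Submodule.norm_le_norm_add_of_mem_orthogonal
        (Submodule.sub_mem _ (hMperp _ huw) (Submodule.smul_mem _ _ huw))
        (Submodule.sub_mem _ (hM _ hw) (Submodule.smul_mem _ _ hw))

theorem mul_infDist_biSup_eigenspace_le (hAc : IsCompactOperator A)
    (hA : (A : H →ₗ[ℝ] H).IsSymmetric) (p : ℝ → Prop) {μ c : ℝ} (hc0 : 0 ≤ c)
    (hc : ∀ z, HasEigenvalue (A : H →ₗ[ℝ] H) z → ¬ p z → c ≤ |z - μ|) (u : H) :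
    c * infDist u ((⨆ z, ⨆ (_ : p z), eigenspace (A : H →ₗ[ℝ] H) z : Submodule ℝ H) : Set H)
      ≤ ‖A u - μ • u‖ :=
  mul_infDist_le_norm_apply_sub_smul hA (fun _ hx => hA.apply_mem_orthogonal_biSup_eigenspace p hx)
    hc0 (fun _ hw => le_norm_apply_sub_smul_of_mem_orthogonal hAc hA p hc0 hc hw) u

end ContinuousLinearMap

theorem subspaceGap_nonneg {H : Type*} [NormedAddCommGroup H] (E F : Set H) :
    0 ≤ subspaceGap E F :=
  le_max_of_le_left (Real.iSup_nonneg fun _ => infDist_nonneg)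

theorem subspaceGap_le {H : Type*} [NormedAddCommGroup H] {E F : Set H} {a : ℝ} (ha : 0 ≤ a)
    (hE : ∀ u ∈ E, ‖u‖ = 1 → infDist u F ≤ a) (hF : ∀ u ∈ F, ‖u‖ = 1 → infDist u E ≤ a) :
    subspaceGap E F ≤ a :=
  max_le (Real.iSup_le (fun u => hE u u.2.1 u.2.2) ha) (Real.iSup_le (fun u => hF u u.2.1 u.2.2) ha)

theorem subspaceGap_eigenspace_biSup_eigenspace_le {H : Type*} [NormedAddCommGroup H]
    [InnerProductSpace ℝ H] [CompleteSpace H] {A B : H →L[ℝ] H}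
    (hA : IsSelfAdjoint A) (hAc : IsCompactOperator A)
    (hB : IsSelfAdjoint B) (hBc : IsCompactOperator B) {μ r δ : ℝ} (hr : 0 < r) (hδ0 : 0 ≤ δ)
    (hiso : ∀ z, HasEigenvalue (A : H →ₗ[ℝ] H) z → |z - μ| < r → z = μ) {p : ℝ → Prop}
    (hp : ∀ z, HasEigenvalue (B : H →ₗ[ℝ] H) z → |z - μ| < r → p z)
    (hδ : ∀ z, p z → |z - μ| ≤ δ) :
    subspaceGap ((eigenspace (A : H →ₗ[ℝ] H) μ : Submodule ℝ H) : Set H)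
      ((⨆ z, ⨆ (_ : p z), eigenspace (B : H →ₗ[ℝ] H) z : Submodule ℝ H) : Set H)
      ≤ (‖A - B‖ + δ) / r := by
  have hAB : ∀ u : H, ‖u‖ = 1 → ‖A u - B u‖ ≤ ‖A - B‖ := fun u hu1 => by
    simpa [hu1] using (A - B).le_opNorm u
  refine subspaceGap_le (by positivity) (fun u hu hu1 => ?_) (fun u hu hu1 => ?_)
  all_goals rw [le_div_iff₀' hr]
  · have hAu : A u = μ • u := mem_eigenspace_iff.mp hu
    calc r * infDist u _ ≤ ‖B u - μ • u‖ :=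
          B.mul_infDist_biSup_eigenspace_le hBc hB.isSymmetric p hr.le
            (fun z hz hpz => not_lt.mp fun h => hpz (hp z hz h)) u
      _ ≤ ‖A - B‖ + δ := by
          rw [← hAu, norm_sub_rev]; linarith [hAB u hu1]
  · have hE : eigenspace (A : H →ₗ[ℝ] H) μ = ⨆ z, ⨆ (_ : z = μ), eigenspace (A : H →ₗ[ℝ] H) z :=
      (iSup_iSup_eq_left (f := fun z _ => eigenspace (A : H →ₗ[ℝ] H) z)).symm
    calc r * infDist u _ ≤ ‖A u - μ • u‖ := by
          rw [hE]
          exact A.mul_infDist_biSup_eigenspace_le hAc hA.isSymmetric (· = μ) hr.le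
            (fun z hz hzμ => not_lt.mp fun h => hzμ (hiso z hz h)) u
      _ ≤ ‖A u - B u‖ + ‖B u - μ • u‖ := norm_sub_le_norm_sub_add_norm_sub _ _ _
      _ ≤ ‖A - B‖ + δ := add_le_add (hAB u hu1) (by
          simpa [hu1] using hB.isSymmetric.norm_apply_sub_smul_le_of_mem_biSup hδ0 hδ hu)

theorem stmt14_general {H : Type*} [NormedAddCommGroup H] [InnerProductSpace ℝ H]
    [CompleteSpace H]
    (T : H →L[ℝ] H) (Tn : ℕ → H →L[ℝ] H)
    (hT : IsSelfAdjoint T) (hTc : IsCompactOperator T)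
    (hTnsa : ∀ k, IsSelfAdjoint (Tn k)) (hTnc : ∀ k, IsCompactOperator (Tn k))
    (hconv : Tendsto (fun k => ‖T - Tn k‖) atTop (nhds 0))
    (μ : ℝ)
    (r : ℝ) (hr : 0 < r)
    (hiso : ∀ z : ℝ, Module.End.HasEigenvalue (T : H →ₗ[ℝ] H) z → |z - μ| < r → z = μ)
    (ν : ℕ → Finset ℝ)
    (hν2 : ∀ ε > 0, ∀ᶠ k in atTop, ∀ z ∈ ν k, |z - μ| < ε)
    (hν3 : ∀ᶠ k in atTop, ∀ z : ℝ,
      Module.End.HasEigenvalue ((Tn k : H →ₗ[ℝ] H)) z → |z - μ| < r → z ∈ ν k) :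
    Tendsto (fun k => subspaceGap
        ((Module.End.eigenspace (T : H →ₗ[ℝ] H) μ : Submodule ℝ H) : Set H)
        ((⨆ z ∈ ν k, Module.End.eigenspace ((Tn k : H →ₗ[ℝ] H)) z : Submodule ℝ H) : Set H))
      atTop (nhds 0) := by
  refine tendsto_order.2 ⟨fun a ha => Eventually.of_forall fun k =>
    ha.trans_le (subspaceGap_nonneg _ _), fun ε hε => ?_⟩
  have hη : 0 < r * ε / 2 := by positivity
  filter_upwards [hν2 _ hη, hν3, hconv.eventually (gt_mem_nhds hη)] with k hνμ hνr hk
  calc _ ≤ (‖T - Tn k‖ + r * ε / 2) / r :=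
        subspaceGap_eigenspace_biSup_eigenspace_le hT hTc (hTnsa k) (hTnc k) hr hη.le hiso hνr
          fun z hz => (hνμ z hz).le
    _ < ε := by rw [div_lt_iff₀ hr]; linarith

/-- Babuška–Osborn eigenfunction convergence: if compact self-adjoint `T_n → T` in
operator norm and `μ ≠ 0` is an (isolated, as eigenvalues of self-adjoint compact
operators are) eigenvalue of `T`, then the gap between the eigenspace
`E = ker(T − μI)` and the span `E_n` of the eigenspaces of `T_n` associated with its
eigenvalues converging to `μ` tends to zero. -/
theorem stmt14 {H : Type*} [NormedAddCommGroup H] [InnerProductSpace ℝ H]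
    [CompleteSpace H]
    (T : H →L[ℝ] H) (Tn : ℕ → H →L[ℝ] H)
    (hT : IsSelfAdjoint T) (hTc : IsCompactOperator T)
    (hTnsa : ∀ k, IsSelfAdjoint (Tn k)) (hTnc : ∀ k, IsCompactOperator (Tn k))
    (hconv : Tendsto (fun k => ‖T - Tn k‖) atTop (nhds 0))
    (μ : ℝ) (hμ0 : μ ≠ 0) (hμ : Module.End.HasEigenvalue (T : H →ₗ[ℝ] H) μ)
    (r : ℝ) (hr : 0 < r)
    (hiso : ∀ z : ℝ, Module.End.HasEigenvalue (T : H →ₗ[ℝ] H) z → |z - μ| < r → z = μ)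
    (ν : ℕ → Finset ℝ)
    (hν1 : ∀ k, ∀ z ∈ ν k, Module.End.HasEigenvalue ((Tn k : H →ₗ[ℝ] H)) z)
    (hν2 : ∀ ε > 0, ∀ᶠ k in atTop, ∀ z ∈ ν k, |z - μ| < ε)
    (hν3 : ∀ᶠ k in atTop, ∀ z : ℝ,
      Module.End.HasEigenvalue ((Tn k : H →ₗ[ℝ] H)) z → |z - μ| < r → z ∈ ν k) :
    Tendsto (fun k => subspaceGap
        ((Module.End.eigenspace (T : H →ₗ[ℝ] H) μ : Submodule ℝ H) : Set H)
        ((⨆ z ∈ ν k, Module.End.eigenspace ((Tn k : H →ₗ[ℝ] H)) z : Submodule ℝ H) : Set H))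
      atTop (nhds 0) :=
  stmt14_general T Tn hT hTc hTnsa hTnc hconv μ r hr hiso ν hν2 hν3
end

section
/- Let A be symmetric positive definite of size n, C symmetric positive definite of size m, B an m×n matrix, and let S₁(λ) denote the problem Ax = (λ+1)BᵀC⁻¹Bx and S₂(λ) the problem Cy = (λ+1)BA⁻¹Bᵀy. Then λ is an eigenvalue of S₁ (with eigenvector x satisfying Bx ≠ 0) if and only if λ is an eigenvalue of S₂ (with eigenvector y satisfying Bᵀy ≠ 0); the bijection on eigenvectors is given by y = −C⁻¹Bx and x = −(λ+1)A⁻¹Bᵀy. -/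
open Matrix

lemma aux_inv_mulVec {k : ℕ} {M : Matrix (Fin k) (Fin k) ℝ} (h : IsUnit M.det)
    (v : Fin k → ℝ) : M⁻¹ *ᵥ (M *ᵥ v) = v := by
  rw [mulVec_mulVec, nonsing_inv_mul _ h, one_mulVec]

lemma aux_mulVec_inv {k : ℕ} {M : Matrix (Fin k) (Fin k) ℝ} (h : IsUnit M.det)
    (v : Fin k → ℝ) : M *ᵥ (M⁻¹ *ᵥ v) = v := by
  rw [mulVec_mulVec, mul_nonsing_inv _ h, one_mulVec]

/-- Equivalence of the two Schur complement problems `S₁ : Ax = (λ+1)BᵀC⁻¹Bx` and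
`S₂ : Cy = (λ+1)BA⁻¹Bᵀy`: `λ` is an eigenvalue of `S₁` (eigenvector `x` with `Bx ≠ 0`)
iff it is an eigenvalue of `S₂` (eigenvector `y` with `Bᵀy ≠ 0`), the bijection on
eigenvectors being `y = −C⁻¹Bx` and `x = −(λ+1)A⁻¹Bᵀy`. -/
theorem stmt16 {n m : ℕ} (A : Matrix (Fin n) (Fin n) ℝ) (B : Matrix (Fin m) (Fin n) ℝ)
    (C : Matrix (Fin m) (Fin m) ℝ) (hA : A.PosDef) (hC : C.PosDef) (lam : ℝ) :
    (∀ x : Fin n → ℝ, B *ᵥ x ≠ 0 → A *ᵥ x = (lam + 1) • ((Bᵀ * C⁻¹ * B) *ᵥ x) →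
      Bᵀ *ᵥ (-(C⁻¹ *ᵥ (B *ᵥ x))) ≠ 0 ∧
      C *ᵥ (-(C⁻¹ *ᵥ (B *ᵥ x)))
        = (lam + 1) • ((B * A⁻¹ * Bᵀ) *ᵥ (-(C⁻¹ *ᵥ (B *ᵥ x))))) ∧
    (∀ y : Fin m → ℝ, Bᵀ *ᵥ y ≠ 0 → C *ᵥ y = (lam + 1) • ((B * A⁻¹ * Bᵀ) *ᵥ y) →
      B *ᵥ (-((lam + 1) • (A⁻¹ *ᵥ (Bᵀ *ᵥ y)))) ≠ 0 ∧
      A *ᵥ (-((lam + 1) • (A⁻¹ *ᵥ (Bᵀ *ᵥ y))))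
        = (lam + 1) • ((Bᵀ * C⁻¹ * B) *ᵥ (-((lam + 1) • (A⁻¹ *ᵥ (Bᵀ *ᵥ y)))))) ∧
    ((∃ x : Fin n → ℝ, B *ᵥ x ≠ 0 ∧ A *ᵥ x = (lam + 1) • ((Bᵀ * C⁻¹ * B) *ᵥ x)) ↔
      (∃ y : Fin m → ℝ, Bᵀ *ᵥ y ≠ 0 ∧
        C *ᵥ y = (lam + 1) • ((B * A⁻¹ * Bᵀ) *ᵥ y))) := by
  have hAd : IsUnit A.det := isUnit_iff_ne_zero.mpr hA.det_pos.ne'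
  have hCd : IsUnit C.det := isUnit_iff_ne_zero.mpr hC.det_pos.ne'
  have h1 : ∀ x : Fin n → ℝ, B *ᵥ x ≠ 0 → A *ᵥ x = (lam + 1) • ((Bᵀ * C⁻¹ * B) *ᵥ x) →
      Bᵀ *ᵥ (-(C⁻¹ *ᵥ (B *ᵥ x))) ≠ 0 ∧
      C *ᵥ (-(C⁻¹ *ᵥ (B *ᵥ x)))
        = (lam + 1) • ((B * A⁻¹ * Bᵀ) *ᵥ (-(C⁻¹ *ᵥ (B *ᵥ x)))) := by
    intro x hBx hx
    rw [← mulVec_mulVec, ← mulVec_mulVec] at hx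
    constructor
    · intro h
      rw [mulVec_neg, neg_eq_zero] at h
      rw [h, smul_zero] at hx
      apply hBx
      have : x = 0 := by
        have := congrArg (A⁻¹ *ᵥ ·) hx
        simpa [aux_inv_mulVec hAd] using this
      simp [this]
    · rw [mulVec_neg, aux_mulVec_inv hCd, ← mulVec_mulVec, ← mulVec_mulVec,
        mulVec_neg, mulVec_neg, mulVec_neg, smul_neg, neg_inj, ← mulVec_smul,
        ← mulVec_smul, ← hx, aux_inv_mulVec hAd]
  have h2 : ∀ y : Fin m → ℝ, Bᵀ *ᵥ y ≠ 0 → C *ᵥ y = (lam + 1) • ((B * A⁻¹ * Bᵀ) *ᵥ y) →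
      B *ᵥ (-((lam + 1) • (A⁻¹ *ᵥ (Bᵀ *ᵥ y)))) ≠ 0 ∧
      A *ᵥ (-((lam + 1) • (A⁻¹ *ᵥ (Bᵀ *ᵥ y))))
        = (lam + 1) • ((Bᵀ * C⁻¹ * B) *ᵥ (-((lam + 1) • (A⁻¹ *ᵥ (Bᵀ *ᵥ y))))) := by
    intro y hBy hy
    rw [← mulVec_mulVec, ← mulVec_mulVec] at hy
    have hy' : y ≠ 0 := by intro h; apply hBy; simp [h]
    have hCy : C *ᵥ y ≠ 0 := by
      intro h
      apply hy'
      have := congrArg (C⁻¹ *ᵥ ·) h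
      simpa [aux_inv_mulVec hCd] using this
    have hBcalc : B *ᵥ (-((lam + 1) • (A⁻¹ *ᵥ (Bᵀ *ᵥ y)))) = -(C *ᵥ y) := by
      rw [mulVec_neg, mulVec_smul, mulVec_mulVec, mulVec_mulVec, neg_inj, hy,
        ← mulVec_mulVec, ← mulVec_mulVec]
    constructor
    · rw [hBcalc]; simpa using hCy
    · rw [mulVec_neg, mulVec_smul, aux_mulVec_inv hAd, ← mulVec_mulVec, ← mulVec_mulVec,
        hBcalc, mulVec_neg, mulVec_neg, aux_inv_mulVec hCd, smul_neg]
  refine ⟨h1, h2, ?_, ?_⟩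
  · rintro ⟨x, hBx, hx⟩
    exact ⟨-(C⁻¹ *ᵥ (B *ᵥ x)), h1 x hBx hx⟩
  · rintro ⟨y, hBy, hy⟩
    exact ⟨-((lam + 1) • (A⁻¹ *ᵥ (Bᵀ *ᵥ y))), h2 y hBy hy⟩
end
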